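/- Let Σ be a finite alphabet and X ⊆ Σ^ℤ a minimal subshift. Then for every word a ∈ L(X) and every k ∈ ℕ there exists a word b ∈ Σ^* such that the concatenation ba belongs to L(X), and there is a unique word c ∈ Σ^k such that every occurrence of ba in a point of X is immediately followed by c; that is, for every x ∈ X and index i, if x|_{[i; i+ℓ(ba)−1]} = ba then x|_{[i+ℓ(ba); i+ℓ(ba)+k−1]} = c. -/

import Mathlib

/-!
Among the left extensions `b ++ a` of `a` in the language, choose one whose set of one-letter
followers is minimal for inclusion. Every longer left extension then has the same followers, so a
fixed follower `c` can be appended after every finite left context of `b ++ a`. Correcting a point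
greedily from left to right and passing to a limit, we get a point in which every occurrence of
`b ++ a` is followed by `c`. The set of such points is closed, shift-invariant and nonempty, hence
all of `X` by minimality. Iterating this one-letter step gives a forced continuation of any length,
which is unique because it can be read off a single occurrence.
-/

/-- The two-sided shift map on `ℤ → A`. -/
def shiftMap {A : Type*} (x : ℤ → A) : ℤ → A := fun i => x (i + 1)

/-- The finite word `w` appears in `x : ℤ → A` at index `i`. -/
def AppearsAt {A : Type*} (w : List A) (x : ℤ → A) (i : ℤ) : Prop :=
  ∀ (j : ℕ) (hj : j < w.length), x (i + j) = w.get ⟨j, hj⟩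

/-- The language of a subshift: finite words appearing in some point of `X`. -/
def InLang {A : Type*} (X : Set (ℤ → A)) (w : List A) : Prop :=
  ∃ x ∈ X, ∃ i : ℤ, AppearsAt w x i

open Set

section Subshift

variable {A : Type*}

def shiftBy (j : ℤ) (x : ℤ → A) : ℤ → A := fun t => x (t + j)

@[simp]
theorem shiftBy_zero (x : ℤ → A) : shiftBy 0 x = x := by
  funext t
  simp [shiftBy]

def window (x : ℤ → A) (i : ℤ) (n : ℕ) : List A := List.ofFn fun j : Fin n => x (i + j)

def Forces (X : Set (ℤ → A)) (w c : List A) : Prop :=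
  ∀ x ∈ X, ∀ i : ℤ, AppearsAt w x i → AppearsAt c x (i + w.length)

def followers (X : Set (ℤ → A)) (w : List A) : Set A := {α | InLang X (w ++ [α])}

section Words

variable {u v w : List A} {x y : ℤ → A} {i : ℤ}

@[simp]
theorem length_window (x : ℤ → A) (i : ℤ) (n : ℕ) : (window x i n).length = n := by
  simp [window]

theorem appearsAt_window (x : ℤ → A) (i : ℤ) (n : ℕ) : AppearsAt (window x i n) x i := by
  intro j hj
  simp [window]

theorem appearsAt_singleton {c : A} : AppearsAt [c] x i ↔ x i = c := by
  simp [AppearsAt]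

theorem appearsAt_append :
    AppearsAt (u ++ v) x i ↔ AppearsAt u x i ∧ AppearsAt v x (i + u.length) := by
  simp only [AppearsAt, List.get_eq_getElem, List.length_append]
  constructor
  · intro h
    refine ⟨fun j hj => by simpa [List.getElem_append_left hj] using h j (by omega),
      fun j hj => ?_⟩
    simpa [add_assoc] using h (u.length + j) (by omega)
  · rintro ⟨hu, hv⟩ j hj
    rcases lt_or_ge j u.length with hj' | hj'
    · simpa [List.getElem_append_left hj'] using hu j hj'
    · rw [List.getElem_append_right hj', ← hv (j - u.length) (by omega)]
      push_cast [hj']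
      ring_nf

theorem appearsAt_shiftBy {j : ℤ} : AppearsAt w (shiftBy j x) i ↔ AppearsAt w x (i + j) := by
  simp only [AppearsAt, shiftBy, add_right_comm i j]

theorem AppearsAt.eqOn (hx : AppearsAt w x i) (hy : AppearsAt w y i) :
    EqOn x y (Ico i (i + w.length)) := by
  intro t ⟨hlo, hhi⟩
  obtain ⟨j, rfl⟩ : ∃ j : ℕ, t = i + j := ⟨(t - i).toNat, by omega⟩
  rw [hx j (by omega), hy j (by omega)]

theorem AppearsAt.congr (hx : AppearsAt w x i) (hxy : EqOn x y (Ico i (i + w.length))) :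
    AppearsAt w y i := fun j hj => by
  rw [← hxy ⟨by omega, by omega⟩, hx j hj]

theorem AppearsAt.eq (hv : AppearsAt v x i) (hw : AppearsAt w x i)
    (hlen : v.length = w.length) : v = w :=
  List.ext_get hlen fun j hjv hjw => by rw [← hv j hjv, ← hw j hjw]

end Words

section Language

variable {X : Set (ℤ → A)} {u v w : List A}

theorem InLang.left_of_append (h : InLang X (u ++ v)) : InLang X u := by
  obtain ⟨x, hx, i, hi⟩ := h
  exact ⟨x, hx, i, (appearsAt_append.1 hi).1⟩

theorem InLang.right_of_append (h : InLang X (u ++ v)) : InLang X v := by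
  obtain ⟨x, hx, i, hi⟩ := h
  exact ⟨x, hx, _, (appearsAt_append.1 hi).2⟩

theorem InLang.nonempty (h : InLang X w) : X.Nonempty := by
  obtain ⟨x, hx, -⟩ := h
  exact ⟨x, hx⟩

theorem InLang.followers_nonempty (h : InLang X w) : (followers X w).Nonempty := by
  obtain ⟨x, hx, i, hi⟩ := h
  exact ⟨x (i + w.length), x, hx, i, appearsAt_append.2 ⟨hi, appearsAt_singleton.2 rfl⟩⟩

theorem followers_append_subset : followers X (u ++ w) ⊆ followers X w := fun α h => by
  change InLang X (u ++ w ++ [α]) at h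
  rw [List.append_assoc] at h
  exact h.right_of_append

theorem exists_followers_append_eq [Finite A] {a : List A} (ha : InLang X a) :
    ∃ b, InLang X (b ++ a) ∧
      ∀ u, InLang X (u ++ (b ++ a)) → followers X (u ++ (b ++ a)) = followers X (b ++ a) := by
  let 𝒮 : Set (Set A) := {S | ∃ b, InLang X (b ++ a) ∧ followers X (b ++ a) = S}
  obtain ⟨S, hS⟩ := (toFinite 𝒮).exists_minimal ⟨_, [], ha, rfl⟩
  obtain ⟨b, hb, rfl⟩ := hS.prop
  refine ⟨b, hb, fun u hu => hS.eq_of_le ⟨u ++ b, by simpa using hu, by simp⟩ ?_⟩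
  exact followers_append_subset

theorem Forces.append_left {c : List A} (h : Forces X w c) (u : List A) :
    Forces X (u ++ w) c := by
  intro x hx i hi
  simpa [add_assoc] using h x hx _ (appearsAt_append.1 hi).2

theorem Forces.append {c d : List A} (hc : Forces X w c) (hd : Forces X (w ++ c) d) :
    Forces X w (c ++ d) := by
  intro x hx i hi
  have hwc := hc x hx i hi
  refine appearsAt_append.2 ⟨hwc, ?_⟩
  simpa [add_assoc] using hd x hx i (appearsAt_append.2 ⟨hi, hwc⟩)

theorem Forces.inLang_append {c : List A} (h : Forces X w c) (hw : InLang X w) :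
    InLang X (w ++ c) := by
  obtain ⟨x, hx, i, hi⟩ := hw
  exact ⟨x, hx, i, appearsAt_append.2 ⟨hi, h x hx i hi⟩⟩

end Language

section ShiftInvariant

variable {X Y : Set (ℤ → A)}

theorem shiftMap_shiftBy (j : ℤ) (x : ℤ → A) :
    shiftMap (shiftBy j x) = shiftBy (j + 1) x := by
  funext t
  simp [shiftMap, shiftBy, add_assoc, add_comm 1 j]

theorem shiftMap_injective : Function.Injective (shiftMap : (ℤ → A) → ℤ → A) :=
  fun x y h => funext fun t => by simpa [shiftMap] using congrFun h (t - 1)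

theorem shiftBy_mem (hinv : shiftMap '' X = X) {x : ℤ → A} (hx : x ∈ X) (j : ℤ) :
    shiftBy j x ∈ X := by
  induction j using Int.induction_on with
  | zero => simpa using hx
  | succ n ih =>
    rw [← shiftMap_shiftBy, ← hinv]
    exact mem_image_of_mem _ ih
  | pred n ih =>
    obtain ⟨y, hy, hyx⟩ := (hinv.symm ▸ ih : shiftBy (-n) x ∈ shiftMap '' X)
    rw [← sub_add_cancel (-(n : ℤ)) 1, ← shiftMap_shiftBy] at hyx
    exact shiftMap_injective hyx ▸ hy

theorem image_shiftMap_eq_of_shiftBy_mem (hY : ∀ y ∈ Y, ∀ j, shiftBy j y ∈ Y) :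
    shiftMap '' Y = Y := by
  refine Subset.antisymm ?_ fun y hy => ⟨shiftBy (-1) y, hY y hy _, ?_⟩
  · rintro _ ⟨y, hy, rfl⟩
    exact hY y hy 1
  · rw [shiftMap_shiftBy, neg_add_cancel, shiftBy_zero]

theorem InLang.exists_appearsAt (hinv : shiftMap '' X = X) {w : List A} (h : InLang X w)
    (i : ℤ) : ∃ x ∈ X, AppearsAt w x i := by
  obtain ⟨x, hx, j, hj⟩ := h
  exact ⟨shiftBy (j - i) x, shiftBy_mem hinv hx _, appearsAt_shiftBy.2 (by simpa using hj)⟩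

/-- Scanning the occurrences of `w` from left to right, each one that is not
followed by `c` is repaired by replacing the point from there on, keeping everything to its left. -/
theorem exists_forall_appearsAt_imp (hinv : shiftMap '' X = X) (hX : X.Nonempty) {w : List A}
    {c : A} (hext : ∀ u, InLang X (u ++ w) → c ∈ followers X (u ++ w)) (lo : ℤ) (n : ℕ) :
    ∃ y ∈ X, ∀ i, lo ≤ i → i < lo + n → AppearsAt w y i → y (i + w.length) = c := by
  induction n with
  | zero => exact hX.imp fun y hy => ⟨hy, fun i h₁ h₂ _ => by omega⟩
  | succ n ih =>
    obtain ⟨y, hy, hgood⟩ := ih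
    by_cases hocc : AppearsAt w y (lo + n)
    · have hyu : AppearsAt (window y lo n ++ w) y lo :=
        appearsAt_append.2 ⟨appearsAt_window y lo n, by rwa [length_window]⟩
      obtain ⟨z, hz, hzu⟩ := (hext _ ⟨y, hy, lo, hyu⟩).exists_appearsAt hinv lo
      obtain ⟨hzuw, hzc⟩ := appearsAt_append.1 hzu
      have hyz : EqOn y z (Ico lo (lo + n + w.length)) := by
        simpa [add_assoc] using hyu.eqOn hzuw
      refine ⟨z, hz, fun i hlo hi hw => ?_⟩
      rcases (show i < lo + n ∨ i = lo + n by push_cast at hi; omega) with hi | rfl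
      · have hwy : AppearsAt w y i :=
          hw.congr (hyz.symm.mono (Ico_subset_Ico hlo (by omega)))
        rw [← hyz ⟨by omega, by omega⟩]
        exact hgood i hlo hi hwy
      · simpa [appearsAt_singleton, add_assoc] using hzc
    · refine ⟨y, hy, fun i hlo hi hw => hgood i hlo ?_ hw⟩
      push_cast at hi
      rcases (show i < lo + n ∨ i = lo + n by omega) with hi | rfl
      exacts [hi, absurd hw hocc]

end ShiftInvariant

section Topology

variable [TopologicalSpace A] [DiscreteTopology A]

theorem isClopen_setOf_appearsAt (w : List A) (i : ℤ) :
    IsClopen {x : ℤ → A | AppearsAt w x i} := by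
  have : {x : ℤ → A | AppearsAt w x i} =
      ⋂ j : Fin w.length, (fun x => x (i + j)) ⁻¹' {w.get j} := by
    ext x
    simp [AppearsAt, Fin.forall_iff]
  exact this ▸ isClopen_iInter_of_finite fun j =>
    (isClopen_discrete _).preimage (continuous_apply _)

variable [Finite A] {X : Set (ℤ → A)} (hcl : IsClosed X) (hinv : shiftMap '' X = X)
  (hmin : ∀ Y : Set (ℤ → A), Y ⊆ X → Y.Nonempty → IsClosed Y →
    shiftMap '' Y = Y → Y = X)
include hcl hinv hmin

theorem forces_singleton_of_mem_followers (hX : X.Nonempty) {w : List A} {c : A}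
    (hext : ∀ u, InLang X (u ++ w) → c ∈ followers X (u ++ w)) : Forces X w [c] := by
  let t : ℤ → Set (ℤ → A) := fun i => {x | AppearsAt w x i → x (i + w.length) = c}
  have ht : ∀ i, IsClosed (t i) := fun i =>
    isClosed_imp (isClopen_setOf_appearsAt w i).isOpen
      (isClosed_eq (continuous_apply _) continuous_const)
  have hYne : (X ∩ ⋂ i, t i).Nonempty := by
    refine hcl.isCompact.inter_iInter_nonempty t ht fun s => ?_
    obtain ⟨lo, hlo⟩ := s.bddBelow
    obtain ⟨up, hup⟩ := s.bddAbove
    obtain ⟨y, hy, hgood⟩ := exists_forall_appearsAt_imp hinv hX hext lo (up + 1 - lo).toNat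
    exact ⟨y, hy, mem_iInter₂.2 fun i hs => hgood i (hlo hs) (by have := hup hs; omega)⟩
  have hYinv : shiftMap '' (X ∩ ⋂ i, t i) = X ∩ ⋂ i, t i := by
    refine image_shiftMap_eq_of_shiftBy_mem fun y ⟨hy, hyt⟩ j => ⟨shiftBy_mem hinv hy j, ?_⟩
    refine mem_iInter.2 fun i hw => ?_
    simpa [shiftBy, add_right_comm] using mem_iInter.1 hyt (i + j) (appearsAt_shiftBy.1 hw)
  have hYX := hmin _ inter_subset_left hYne (hcl.inter (isClosed_iInter ht)) hYinv
  intro x hx i hw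
  exact appearsAt_singleton.2 (mem_iInter.1 (hYX.symm ▸ hx : x ∈ X ∩ ⋂ i, t i).2 i hw)

theorem exists_forces_singleton {a : List A} (ha : InLang X a) :
    ∃ b c, InLang X (b ++ a) ∧ Forces X (b ++ a) [c] := by
  obtain ⟨b, hb, hstable⟩ := exists_followers_append_eq ha
  obtain ⟨c, hc⟩ := hb.followers_nonempty
  exact ⟨b, c, hb, forces_singleton_of_mem_followers hcl hinv hmin ha.nonempty
    fun u hu => (hstable u hu).symm ▸ hc⟩

theorem exists_forces (k : ℕ) {a : List A} (ha : InLang X a) :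
    ∃ b c, c.length = k ∧ InLang X (b ++ a) ∧ Forces X (b ++ a) c := by
  induction k generalizing a with
  | zero => exact ⟨[], [], rfl, ha, fun _ _ _ _ j hj => absurd hj (by simp)⟩
  | succ k ih =>
    obtain ⟨b, c, hlen, hb, hc⟩ := ih ha
    obtain ⟨b₂, α, hb₂, hα⟩ := exists_forces_singleton hcl hinv hmin (hc.inLang_append hb)
    refine ⟨b₂ ++ b, c ++ [α], by simp [hlen], ?_, ?_⟩
    · simpa using InLang.left_of_append (u := b₂ ++ b ++ a) (v := c) (by simpa using hb₂)
    · simpa using (hc.append_left b₂).append (by simpa using hα)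

end Topology

end Subshift

theorem minimal_subshift_unique_continuation_general
    {A : Type*} [Fintype A] [TopologicalSpace A] [DiscreteTopology A]
    (X : Set (ℤ → A)) (hcl : IsClosed X)
    (hinv : shiftMap '' X = X)
    (hmin : ∀ Y : Set (ℤ → A), Y ⊆ X → Y.Nonempty → IsClosed Y →
      shiftMap '' Y = Y → Y = X)
    (a : List A) (ha : InLang X a) (k : ℕ) :
    ∃ b : List A, InLang X (b ++ a) ∧
      ∃! c : List A, c.length = k ∧ ∀ x ∈ X, ∀ i : ℤ,
        AppearsAt (b ++ a) x i → AppearsAt c x (i + (b ++ a).length) := by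
  obtain ⟨b, c, hlen, hb, hc⟩ := exists_forces hcl hinv hmin k ha
  refine ⟨b, hb, c, ⟨hlen, hc⟩, fun c' ⟨hlen', hc'⟩ => ?_⟩
  obtain ⟨x, hx, i, hi⟩ := hb
  exact (hc' x hx i hi).eq (hc x hx i hi) (hlen'.trans hlen.symm)

/-- In a minimal subshift, for every word `a` of the language and every `k`
there is a word `b` with `b ++ a` in the language and a unique word `c` of length `k`
such that every occurrence of `b ++ a` in a point of `X` is immediately followed by `c`. -/
theorem minimal_subshift_unique_continuation
    {A : Type*} [Fintype A] [TopologicalSpace A] [DiscreteTopology A]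
    (X : Set (ℤ → A)) (hne : X.Nonempty) (hcl : IsClosed X)
    (hinv : shiftMap '' X = X)
    (hmin : ∀ Y : Set (ℤ → A), Y ⊆ X → Y.Nonempty → IsClosed Y →
      shiftMap '' Y = Y → Y = X)
    (a : List A) (ha : InLang X a) (k : ℕ) :
    ∃ b : List A, InLang X (b ++ a) ∧
      ∃! c : List A, c.length = k ∧ ∀ x ∈ X, ∀ i : ℤ,
        AppearsAt (b ++ a) x i → AppearsAt c x (i + (b ++ a).length) :=
  minimal_subshift_unique_continuation_general X hcl hinv hmin a ha k
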